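/- For every γ > 0, the function F_γ(p) = p · I'_γ(p)/I_γ(p) is strictly increasing on (0, ∞) and maps (0, ∞) bijectively onto the interval (γ, ∞). -/

import Mathlib

/-!
For `x > 0` the series factors as `I_γ(x) = (x/2)^γ S((x/2)^2)` with `S(u) = ∑ c_k u^k` and
`c_k = 1/(k! Γ(k+γ+1)) > 0`, so that `x I'_γ(x)/I_γ(x) = γ + 2 m(u)`, where `m(u) = u S'(u)/S(u)`
is the mean of `k` under the weights `c_k u^k`. Passing from `u` to `v = r u` with `r > 1`
reweights by `r^k`, which moves mass to larger `k`: the series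
`∑ (k - m(u)) (r^k - r^{m(u)}) c_k u^k` has nonnegative terms and a positive one, and its value
is `S(v) (m(v) - m(u))`. Moreover `m(0) = 0`, and `m(u) → ∞` since for large `u` the terms
with `k ≥ N` carry at least half of `S(u)`. The intermediate value theorem then gives the
bijection onto `(γ, ∞)`.
-/

open Real Set Filter Topology

/-- Modified Bessel function of the first kind of real order `ν`,
defined via its power series. -/
noncomputable def besselI (ν x : ℝ) : ℝ :=
  ∑' k : ℕ, (x / 2) ^ (2 * (k : ℝ) + ν) / ((k.factorial : ℝ) * Real.Gamma ((k : ℝ) + ν + 1))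

theorem StrictMonoOn.bijOn_Ioi_of_tendsto {α β : Type*} [ConditionallyCompleteLinearOrder α]
    [TopologicalSpace α] [OrderTopology α] [DenselyOrdered α] [NoMaxOrder α] [LinearOrder β]
    [TopologicalSpace β] [OrderClosedTopology β] {f : α → β} {a : α} {b : β}
    (hf : StrictMonoOn f (Ioi a)) (hc : ContinuousOn f (Ioi a))
    (hbot : Tendsto f (𝓝[>] a) (𝓝 b)) (htop : Tendsto f atTop atTop) :
    BijOn f (Ioi a) (Ioi b) := by
  refine ⟨fun x hx => ?_, hf.injOn, fun y hy => ?_⟩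
  · obtain ⟨z, haz, hzx⟩ := exists_between hx
    have hbz : b ≤ f z := le_of_tendsto hbot <| mem_of_superset (Ioo_mem_nhdsGT haz)
      fun w hw => (hf hw.1 haz hw.2).le
    exact hbz.trans_lt (hf haz hx hzx)
  · obtain ⟨x₁, hx₁y, hx₁⟩ :=
      ((hbot.eventually (isOpen_Iio.mem_nhds hy)).and self_mem_nhdsWithin).exists
    obtain ⟨x₂, hx₂y, hx₂⟩ :=
      ((htop.eventually (eventually_ge_atTop y)).and (eventually_gt_atTop a)).exists
    exact hc.surjOn_Icc hx₁ hx₂ ⟨le_of_lt hx₁y, hx₂y⟩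

noncomputable def powerSum (a : ℕ → ℝ) (u : ℝ) : ℝ := ∑' k, a k * u ^ k

noncomputable def meanIndex (a : ℕ → ℝ) (u : ℝ) : ℝ :=
  powerSum (fun k : ℕ => k * a k) u / powerSum a u

theorem powerSum_zero (a : ℕ → ℝ) : powerSum a 0 = a 0 := by
  rw [powerSum, tsum_eq_single 0 fun k hk => by simp [hk]]
  simp

theorem meanIndex_zero (a : ℕ → ℝ) : meanIndex a 0 = 0 := by
  simp [meanIndex, powerSum_zero]

theorem mul_tsum_natCast_mul_mul_pow_pred (a : ℕ → ℝ) (x : ℝ) :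
    x * ∑' k : ℕ, (k : ℝ) * a k * x ^ (k - 1) = powerSum (fun k : ℕ => k * a k) x := by
  rw [powerSum, ← tsum_mul_left]
  congr 1 with (_ | k)
  · simp
  · simp only [Nat.add_sub_cancel, pow_succ]; ring

section PowerSum

variable {a : ℕ → ℝ}

theorem summable_natCast_mul_mul_pow (ha : ∀ k, 0 ≤ a k)
    (hs : ∀ u, Summable fun k => a k * u ^ k) (u : ℝ) :
    Summable fun k : ℕ => (k : ℝ) * a k * u ^ k := by
  refine .of_norm_bounded (hs (2 * |u|)) fun k => ?_
  have hk : (k : ℝ) ≤ 2 ^ k := by exact_mod_cast Nat.lt_two_pow_self.le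
  rw [norm_mul, norm_mul, norm_pow, Real.norm_natCast, Real.norm_of_nonneg (ha k), mul_pow,
    Real.norm_eq_abs]
  calc (k : ℝ) * a k * |u| ^ k ≤ 2 ^ k * a k * |u| ^ k := by gcongr; exact ha k
    _ = a k * (2 ^ k * |u| ^ k) := by ring

theorem hasDerivAt_powerSum (ha : ∀ k, 0 ≤ a k) (hs : ∀ u, Summable fun k => a k * u ^ k)
    (x : ℝ) : HasDerivAt (powerSum a) (∑' k : ℕ, (k : ℝ) * a k * x ^ (k - 1)) x := by
  set R := |x| + 1
  have hR : 0 < R := by positivity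
  have hshift : ∀ k : ℕ, (k : ℝ) * a k * R ^ (k - 1) = R⁻¹ * ((k : ℝ) * a k * R ^ k) := by
    rintro (_ | k)
    · simp
    · simp only [Nat.add_sub_cancel, pow_succ]; field_simp
  have hsum : Summable fun k : ℕ => (k : ℝ) * a k * R ^ (k - 1) := by
    simpa only [hshift] using (summable_natCast_mul_mul_pow ha hs R).mul_left R⁻¹
  have hx : x ∈ Ioo (-R) R := abs_lt.1 (by linarith)
  unfold powerSum
  refine hasDerivAt_tsum_of_isPreconnected (y₀ := 0) hsum isOpen_Ioo isPreconnected_Ioo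
    (g := fun k y => a k * y ^ k) (g' := fun k y => (k : ℝ) * a k * y ^ (k - 1))
    (fun k y _ => ?_) (fun k y hy => ?_) (by simp [hR]) (hs 0) hx
  · exact ((hasDerivAt_pow k y).const_mul (a k)).congr_deriv (by ring)
  · have hy' : |y| ≤ R := abs_le.2 ⟨hy.1.le, hy.2.le⟩
    rw [norm_mul, norm_mul, norm_pow, Real.norm_natCast, Real.norm_of_nonneg (ha k),
      Real.norm_eq_abs]
    have := ha k
    gcongr

theorem continuous_powerSum (ha : ∀ k, 0 ≤ a k) (hs : ∀ u, Summable fun k => a k * u ^ k) :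
    Continuous (powerSum a) :=
  continuous_iff_continuousAt.2 fun x => (hasDerivAt_powerSum ha hs x).continuousAt

theorem powerSum_pos (ha : ∀ k, 0 ≤ a k) (hs : ∀ u, Summable fun k => a k * u ^ k) {i : ℕ}
    (hi : 0 < a i) {u : ℝ} (hu : 0 < u) : 0 < powerSum a u :=
  (hs u).tsum_pos (fun k => mul_nonneg (ha k) (pow_nonneg hu.le k)) i (by positivity)

theorem hasSum_natCast_sub_mul_mul_pow (ha : ∀ k, 0 ≤ a k)
    (hs : ∀ u, Summable fun k => a k * u ^ k) (θ x : ℝ) :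
    HasSum (fun k : ℕ => ((k : ℝ) - θ) * (a k * x ^ k))
      (powerSum (fun k : ℕ => k * a k) x - θ * powerSum a x) := by
  simpa only [powerSum, sub_mul, mul_assoc] using
    (summable_natCast_mul_mul_pow ha hs x).hasSum.sub ((hs x).hasSum.mul_left θ)

theorem meanIndex_lt_meanIndex (ha : ∀ k, 0 < a k) (hs : ∀ u, Summable fun k => a k * u ^ k)
    {u v : ℝ} (hu : 0 < u) (huv : u < v) : meanIndex a u < meanIndex a v := by
  have ha' : ∀ k, 0 ≤ a k := fun k => (ha k).le
  set θ := meanIndex a u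
  set r := v / u
  have hS₀u : 0 < powerSum a u := powerSum_pos ha' hs (ha 0) hu
  have hS₀v : 0 < powerSum a v := powerSum_pos ha' hs (ha 0) (hu.trans huv)
  have hθ : 0 < θ :=
    div_pos (powerSum_pos (fun k => by have := ha k; positivity)
      (summable_natCast_mul_mul_pow ha' hs) (i := 1) (by simpa using ha 1) hu) hS₀u
  have hr : 1 < r := (one_lt_div hu).2 huv
  have hv : ∀ k : ℕ, v ^ k = r ^ (k : ℝ) * u ^ k := fun k => by
    rw [Real.rpow_natCast, ← mul_pow, div_mul_cancel₀ _ hu.ne']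
  -- each summand is `(k - θ) (r^k - r^θ) a_k u^k ≥ 0`, and the summand at `k = 0` is positive
  have hsum := (hasSum_natCast_sub_mul_mul_pow ha' hs θ v).sub
    ((hasSum_natCast_sub_mul_mul_pow ha' hs θ u).mul_left (r ^ θ))
  have hθu : powerSum (fun k : ℕ => k * a k) u - θ * powerSum a u = 0 := by
    rw [show θ * powerSum a u = _ from div_mul_cancel₀ _ hS₀u.ne', sub_self]
  rw [hθu, mul_zero, sub_zero] at hsum
  have hterm : ∀ k : ℕ, ((k : ℝ) - θ) * (a k * v ^ k) - r ^ θ * (((k : ℝ) - θ) * (a k * u ^ k))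
      = ((k : ℝ) - θ) * (r ^ (k : ℝ) - r ^ θ) * (a k * u ^ k) := fun k => by rw [hv]; ring
  simp only [hterm] at hsum
  have hmonovary : Monovary id (r ^ · : ℝ → ℝ) :=
    monotone_id.monovary (Real.monotone_rpow_of_base_ge_one hr.le)
  have hpos : 0 < powerSum (fun k : ℕ => k * a k) v - θ * powerSum a v := by
    refine hsum.tsum_eq ▸ hsum.summable.tsum_pos (fun k => ?_) 0 ?_
    · exact mul_nonneg (monovary_iff_forall_mul_nonneg.1 hmonovary θ k)
        (mul_nonneg (ha' k) (pow_nonneg hu.le k))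
    · have := one_lt_rpow hr hθ
      rw [Nat.cast_zero, rpow_zero, pow_zero, mul_one]
      exact mul_pos (mul_pos_of_neg_of_neg (by linarith) (by linarith)) (ha 0)
  rw [meanIndex, lt_div_iff₀ hS₀v]
  linarith

theorem meanIndex_strictMonoOn (ha : ∀ k, 0 < a k) (hs : ∀ u, Summable fun k => a k * u ^ k) :
    StrictMonoOn (meanIndex a) (Ioi 0) :=
  fun _ hu _ _ huv => meanIndex_lt_meanIndex ha hs hu huv

theorem continuousOn_meanIndex (ha : ∀ k, 0 < a k) (hs : ∀ u, Summable fun k => a k * u ^ k) :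
    ContinuousOn (meanIndex a) (Ici 0) := by
  have ha' : ∀ k, 0 ≤ a k := fun k => (ha k).le
  refine ((continuous_powerSum (fun k => by have := ha k; positivity)
    (summable_natCast_mul_mul_pow ha' hs)).continuousOn.div
      (continuous_powerSum ha' hs).continuousOn fun u hu => ?_)
  rcases (mem_Ici.1 hu).eq_or_lt with rfl | hu
  · exact powerSum_zero a ▸ (ha 0).ne'
  · exact (powerSum_pos ha' hs (ha 0) hu).ne'

theorem sum_range_mul_pow_le_tsum_nat_add (ha : ∀ k, 0 < a k)
    (hs : ∀ u, Summable fun k => a k * u ^ k) (N : ℕ) :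
    ∀ᶠ u in atTop, ∑ k ∈ Finset.range N, a k * u ^ k ≤ ∑' k, a (k + N) * u ^ (k + N) := by
  set D := ∑ k ∈ Finset.range N, a k
  filter_upwards [eventually_ge_atTop 1, eventually_ge_atTop (D / a N)] with u hu1 huD
  have hu0 : 0 < u := one_pos.trans_le hu1
  have hhead : u * ∑ k ∈ Finset.range N, a k * u ^ k ≤ D * u ^ N := by
    rw [Finset.mul_sum, Finset.sum_mul]
    refine Finset.sum_le_sum fun k hk => ?_
    calc u * (a k * u ^ k) = a k * u ^ (k + 1) := by ring
      _ ≤ a k * u ^ N := by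
        have := ha k
        gcongr
        exact Finset.mem_range.1 hk
  have htail : a N * u ^ N ≤ ∑' k, a (k + N) * u ^ (k + N) := by
    simpa using ((summable_nat_add_iff N).2 (hs u)).le_tsum 0
      fun k _ => mul_nonneg (ha _).le (pow_nonneg hu0.le _)
  have hDu : D ≤ a N * u := (div_le_iff₀' (ha N)).1 huD
  refine le_of_mul_le_mul_left ?_ hu0
  nlinarith [pow_pos hu0 N]

theorem tendsto_meanIndex_atTop (ha : ∀ k, 0 < a k) (hs : ∀ u, Summable fun k => a k * u ^ k) :
    Tendsto (meanIndex a) atTop atTop := by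
  have ha' : ∀ k, 0 ≤ a k := fun k => (ha k).le
  refine tendsto_atTop.2 fun M => ?_
  obtain ⟨N, hN⟩ := exists_nat_ge (2 * M)
  filter_upwards [sum_range_mul_pow_le_tsum_nat_add ha hs N, eventually_gt_atTop 0]
    with u hPT hu
  set P := ∑ k ∈ Finset.range N, a k * u ^ k
  set T := ∑' k, a (k + N) * u ^ (k + N)
  have hS₀ : powerSum a u = P + T := ((hs u).sum_add_tsum_nat_add N).symm
  have hS₁ : N * T ≤ powerSum (fun k : ℕ => k * a k) u := by
    have hs₁ := summable_natCast_mul_mul_pow ha' hs u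
    rw [powerSum, ← hs₁.sum_add_tsum_nat_add N, ← tsum_mul_left]
    refine le_add_of_nonneg_of_le
      (Finset.sum_nonneg fun k _ => by have := ha' k; positivity)
      (((summable_nat_add_iff N).2 (hs u)).mul_left _ |>.tsum_le_tsum (fun k => ?_)
        ((summable_nat_add_iff N).2 hs₁))
    have := ha' (k + N)
    have : (N : ℝ) ≤ ((k + N : ℕ) : ℝ) := by exact_mod_cast Nat.le_add_left N k
    rw [mul_assoc]
    gcongr
  suffices (N : ℝ) / 2 ≤ meanIndex a u by linarith
  rw [meanIndex, le_div_iff₀ (powerSum_pos ha' hs (ha 0) hu), hS₀]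
  nlinarith [mul_le_mul_of_nonneg_left hPT N.cast_nonneg]

end PowerSum

theorem Real.Gamma_mul_pow_le_Gamma_natCast_add {s : ℝ} (hs : 0 < s) (k : ℕ) :
    Gamma s * s ^ k ≤ Gamma (k + s) := by
  induction k with
  | zero => simp
  | succ k ih =>
    have hks : 0 < (k : ℝ) + s := by positivity
    rw [Nat.cast_succ, add_right_comm, Gamma_add_one hks.ne', pow_succ, ← mul_assoc, mul_comm]
    have := k.cast_nonneg (α := ℝ)
    gcongr
    linarith

noncomputable def besselCoeff (ν : ℝ) (k : ℕ) : ℝ :=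
  ((k.factorial : ℝ) * Gamma ((k : ℝ) + ν + 1))⁻¹

theorem besselCoeff_pos {ν : ℝ} (hν : -1 < ν) (k : ℕ) : 0 < besselCoeff ν k := by
  have := Gamma_pos_of_pos (show 0 < (k : ℝ) + ν + 1 by linarith [k.cast_nonneg (α := ℝ)])
  unfold besselCoeff
  positivity

theorem summable_besselCoeff_mul_pow {ν : ℝ} (hν : -1 < ν) (u : ℝ) :
    Summable fun k => besselCoeff ν k * u ^ k := by
  have hν₁ : 0 < ν + 1 := by linarith
  refine .of_norm_bounded
    ((summable_pow_div_factorial (|u| / (ν + 1))).mul_left (Gamma (ν + 1))⁻¹) fun k => ?_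
  have hΓ := Gamma_mul_pow_le_Gamma_natCast_add hν₁ k
  have := Gamma_pos_of_pos hν₁
  rw [norm_mul, norm_pow, Real.norm_of_nonneg (besselCoeff_pos hν k).le, Real.norm_eq_abs,
    besselCoeff, add_assoc, div_pow]
  calc ((k.factorial : ℝ) * Gamma (k + (ν + 1)))⁻¹ * |u| ^ k
      ≤ ((k.factorial : ℝ) * (Gamma (ν + 1) * (ν + 1) ^ k))⁻¹ * |u| ^ k := by gcongr
    _ = (Gamma (ν + 1))⁻¹ * (|u| ^ k / (ν + 1) ^ k / k.factorial) := by field_simp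

theorem besselI_eq_rpow_mul_powerSum (ν : ℝ) {x : ℝ} (hx : 0 < x) :
    besselI ν x = (x / 2) ^ ν * powerSum (besselCoeff ν) ((x / 2) ^ 2) := by
  rw [besselI, powerSum, ← tsum_mul_left]
  congr 1 with k
  rw [rpow_add (by positivity), rpow_mul_natCast (by positivity), rpow_two, besselCoeff]
  ring

theorem hasDerivAt_besselI {ν : ℝ} (hν : -1 < ν) {x : ℝ} (hx : 0 < x) :
    HasDerivAt (besselI ν) ((x / 2) ^ ν * (ν * powerSum (besselCoeff ν) ((x / 2) ^ 2)
      + 2 * powerSum (fun k : ℕ => k * besselCoeff ν k) ((x / 2) ^ 2)) / x) x := by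
  have hc : ∀ k, 0 ≤ besselCoeff ν k := fun k => (besselCoeff_pos hν k).le
  have hhalf : HasDerivAt (fun y : ℝ => y / 2) (1 / 2) x := (hasDerivAt_id x).div_const 2
  have hpow := hhalf.rpow_const (p := ν) (Or.inl (by positivity))
  have hseries := (hasDerivAt_powerSum hc (summable_besselCoeff_mul_pow hν) ((x / 2) ^ 2)).comp x
    (hhalf.pow 2)
  have hS₁ := mul_tsum_natCast_mul_mul_pow_pred (besselCoeff ν) ((x / 2) ^ 2)
  have hrpow : (x / 2) ^ (ν - 1) = (x / 2) ^ ν / (x / 2) := rpow_sub_one (by positivity) ν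
  refine ((hpow.mul hseries).congr_of_eventuallyEq ?_).congr_deriv ?_
  · filter_upwards [Ioi_mem_nhds hx] with y hy using besselI_eq_rpow_mul_powerSum ν hy
  · simp only [Function.comp_apply, Pi.pow_apply]
    rw [← hS₁, hrpow]
    field_simp
    ring

theorem mul_deriv_besselI_div_besselI {ν : ℝ} (hν : -1 < ν) {x : ℝ} (hx : 0 < x) :
    x * deriv (besselI ν) x / besselI ν x = ν + 2 * meanIndex (besselCoeff ν) ((x / 2) ^ 2) := by
  have hS₀ := powerSum_pos (fun k => (besselCoeff_pos hν k).le) (summable_besselCoeff_mul_pow hν)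
    (besselCoeff_pos hν 0) (u := (x / 2) ^ 2) (by positivity)
  have := rpow_pos_of_pos (half_pos hx) ν
  rw [(hasDerivAt_besselI hν hx).deriv, besselI_eq_rpow_mul_powerSum ν hx, meanIndex]
  set u := (x / 2) ^ 2
  field_simp

/-- For every `γ > 0`, the function `F_γ(p) = p I'_γ(p)/I_γ(p)` is strictly
increasing on `(0, ∞)` and maps `(0, ∞)` bijectively onto `(γ, ∞)`. -/
theorem besselI_logDeriv_strictMono_bijOn (γ : ℝ) (hγ : 0 < γ) :
    StrictMonoOn (fun p : ℝ => p * deriv (besselI γ) p / besselI γ p) (Set.Ioi 0) ∧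
    Set.BijOn (fun p : ℝ => p * deriv (besselI γ) p / besselI γ p)
      (Set.Ioi 0) (Set.Ioi γ) := by
  have hγ' : -1 < γ := by linarith
  have hc := besselCoeff_pos hγ'
  have hs := summable_besselCoeff_mul_pow hγ'
  set G : ℝ → ℝ := fun p => γ + 2 * meanIndex (besselCoeff γ) ((p / 2) ^ 2)
  have hFG : EqOn (fun p : ℝ => p * deriv (besselI γ) p / besselI γ p) G (Ioi 0) :=
    fun p hp => mul_deriv_besselI_div_besselI hγ' hp
  have hG_mono : StrictMonoOn G (Ioi 0) := fun p hp q hq hpq => by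
    have hp' : 0 < p := hp
    have hq' : 0 < q := hq
    have := meanIndex_strictMonoOn hc hs (mem_Ioi.2 (by positivity : 0 < (p / 2) ^ 2))
      (mem_Ioi.2 (by positivity : 0 < (q / 2) ^ 2)) (by gcongr)
    simp only [G]
    linarith
  have hG_cont : Continuous G := continuous_const.add <| continuous_const.mul <|
    (continuousOn_meanIndex hc hs).comp_continuous (by fun_prop) fun p => sq_nonneg (p / 2)
  have hG_zero : Tendsto G (𝓝[>] 0) (𝓝 γ) := by
    simpa [G, meanIndex_zero] using (hG_cont.tendsto 0).mono_left nhdsWithin_le_nhds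
  have hG_top : Tendsto G atTop atTop :=
    tendsto_atTop_add_const_left _ _ <| Tendsto.const_mul_atTop two_pos <|
      (tendsto_meanIndex_atTop hc hs).comp <|
        (tendsto_pow_atTop two_ne_zero).comp (tendsto_id.atTop_div_const two_pos)
  exact ⟨hG_mono.congr hFG.symm,
    (hG_mono.bijOn_Ioi_of_tendsto hG_cont.continuousOn hG_zero hG_top).congr hFG.symm⟩
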